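/- Let G be a K₆-free graph on n vertices, and let S be a set of vertices of G such that the subgraph of G induced by S is K₅-free. If |S| ≥ 49n/50, then τ_B(G) ≤ 3n²/20. -/

import Mathlib

open SimpleGraph Finset

variable {V : Type*} [Fintype V] [DecidableEq V]

/-- `A` is a triangle-independent edge set of `G`: a set of edges of `G`
containing at most one edge from each triangle of `G`. -/
def IsTriangleIndep (G : SimpleGraph V) (A : Finset (Sym2 V)) : Prop :=
  (A : Set (Sym2 V)) ⊆ G.edgeSet ∧
    ∀ a b c : V, G.Adj a b → G.Adj b c → G.Adj a c →
      ({s(a, b), s(b, c), s(a, c)} ∩ A).card ≤ 1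

/-- `α₁(G)`: the maximum size of a triangle-independent set in `G`. -/
noncomputable def alphaOne (G : SimpleGraph V) : ℕ :=
  sSup {k | ∃ A : Finset (Sym2 V), IsTriangleIndep G A ∧ A.card = k}

/-- `τ_B(G)`: the minimum size of an edge set of `G` whose deletion makes `G` bipartite. -/
noncomputable def tauB (G : SimpleGraph V) : ℕ :=
  sInf {k | ∃ D : Finset (Sym2 V), (D : Set (Sym2 V)) ⊆ G.edgeSet ∧
    (G.deleteEdges (D : Set (Sym2 V))).Colorable 2 ∧ D.card = k}

/-- `b(G)`: the maximum size of a vertex set inducing a bipartite subgraph of `G`. -/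
noncomputable def bipNum (G : SimpleGraph V) : ℕ :=
  sSup {k | ∃ B : Finset V, (G.induce (B : Set V)).Colorable 2 ∧ B.card = k}

/-!
Edges are counted as ordered pairs (`SimpleGraph.interedges`), so every count is twice a number of
edges. A `K_{r+2}`-free set `X` has an `(r+1)`-colouring with `m + e(X) ≤ r|X|²/(2(r+1))`, where
`m` is the number of monochromatic edges: colour the neighbourhood of a vertex of maximum degree by
induction and its non-neighbours with a new colour. For the `K₅`-free set `S`, apply this with three
colours to the neighbourhood of each `u ∈ S` and give the non-neighbours of `u` a fourth colour;
averaging over `u` and Cauchy–Schwarz yield a 4-colouring of `S` with `2m + e(S) ≤ 27|S|²/64`.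
Extending it greedily to all vertices, each new vertex makes at most a quarter of its new edges
monochromatic. Of the three ways of pairing up four colours into two sides, one leaves at most
`(2m + e)/3` edges inside the sides; deleting them gives `τ_B(G) ≤ 9|S|²/64 + (n - |S|) n/2`, which
is at most `3n²/20` when `|S| ≥ 49n/50`.
-/

namespace SimpleGraph

variable {α κ : Type*}

section Interedges

variable (G : SimpleGraph α) [DecidableRel G.Adj] {X X₁ X₂ Y Y₁ Y₂ : Finset α}

theorem card_interedges_comm (X Y : Finset α) :
    #(G.interedges X Y) = #(G.interedges Y X) :=
  have : Std.Symm G.Adj := ⟨fun _ _ h => h.symm⟩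
  Rel.card_interedges_comm X Y

theorem card_interedges_eq_sum (X Y : Finset α) :
    #(G.interedges X Y) = ∑ p ∈ X, #{q ∈ Y | G.Adj p q} := by
  simp only [interedges_def, card_filter, sum_product]

theorem card_interedges_le_card_mul {d : ℕ} (h : ∀ p ∈ X, #{q ∈ Y | G.Adj p q} ≤ d) :
    #(G.interedges X Y) ≤ #X * d := by
  rw [card_interedges_eq_sum]
  exact sum_le_card_nsmul X _ d h

theorem card_interedges_univ [Fintype α] :
    #(G.interedges univ univ) = 2 * #G.edgeFinset := by
  rw [← sum_degrees_eq_twice_card_edges, card_interedges_eq_sum]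
  simp only [← card_neighborFinset_eq_degree, neighborFinset_eq_filter]

theorem sq_card_interedges_le (S : Finset α) :
    #(G.interedges S S) ^ 2 ≤ #S * ∑ p ∈ S, #{q ∈ S | G.Adj p q} ^ 2 := by
  rw [card_interedges_eq_sum]
  exact sq_sum_le_card_mul_sum_sq

theorem sum_interedges_fst (S : Finset α) (g : α → ℕ) :
    ∑ e ∈ G.interedges S S, g e.1 = ∑ p ∈ S, #{q ∈ S | G.Adj p q} * g p := by
  simp only [interedges_def, sum_filter, sum_product, card_filter, sum_mul, boole_mul]

theorem sum_interedges_snd (S : Finset α) (g : α → ℕ) :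
    ∑ e ∈ G.interedges S S, g e.2 = ∑ e ∈ G.interedges S S, g e.1 := by
  have hswap : ∀ e ∈ G.interedges S S, e.swap ∈ G.interedges S S := fun e he => by
    simpa [mem_interedges_iff, G.adj_comm, and_left_comm] using he
  exact sum_nbij' Prod.swap Prod.swap hswap hswap (fun _ _ => rfl) (fun _ _ => rfl) fun _ _ => rfl

theorem interedges_filter_eq (S : Finset α) (P : α → Prop) [DecidablePred P] :
    G.interedges {v ∈ S | P v} {v ∈ S | P v} = {e ∈ G.interedges S S | P e.1 ∧ P e.2} := by
  ext ⟨p, q⟩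
  simp only [mk_mem_interedges_iff, mem_filter]
  tauto

theorem interedges_eq_empty_of_cliqueFreeOn_two {X : Finset α} (hX : G.CliqueFreeOn X 2) :
    G.interedges X X = ∅ := by
  rw [cliqueFreeOn_two] at hX
  ext ⟨p, q⟩
  simp only [mk_mem_interedges_iff, notMem_empty, iff_false, not_and]
  exact fun hp hq hpq => hX hp hq hpq.ne hpq

theorem cliqueFreeOn_filter_adj {X : Finset α} {n : ℕ} (hX : G.CliqueFreeOn X (n + 1))
    {u : α} (hu : u ∈ X) : G.CliqueFreeOn ({v ∈ X | G.Adj u v} : Finset α) n := by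
  convert CliqueFreeOn.of_succ (G := G) hX hu using 1
  ext v
  simp [mem_neighborSet]

variable [DecidableEq α]

theorem card_interedges_union_left (h : Disjoint X₁ X₂) (Y : Finset α) :
    #(G.interedges (X₁ ∪ X₂) Y) = #(G.interedges X₁ Y) + #(G.interedges X₂ Y) := by
  simp only [card_interedges_eq_sum, sum_union h]

theorem card_interedges_union_right (X : Finset α) (h : Disjoint Y₁ Y₂) :
    #(G.interedges X (Y₁ ∪ Y₂)) = #(G.interedges X Y₁) + #(G.interedges X Y₂) := by
  simp only [card_interedges_comm G X, card_interedges_union_left G h]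

theorem card_interedges_insert {a : α} (ha : a ∉ X) :
    #(G.interedges (insert a X) (insert a X)) =
      #(G.interedges X X) + 2 * #{q ∈ X | G.Adj a q} := by
  have hdisj : Disjoint {a} X := disjoint_singleton_left.2 ha
  have hrow : #(G.interedges {a} X) = #{q ∈ X | G.Adj a q} := by
    simp [card_interedges_eq_sum]
  have hloop : #(G.interedges {a} {a}) = 0 := by simp [card_interedges_eq_sum]
  rw [insert_eq, card_interedges_union_left G hdisj, card_interedges_union_right G _ hdisj,
    card_interedges_union_right G _ hdisj, card_interedges_comm G X {a}, hrow, hloop]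
  ring

theorem card_interedges_le_of_subset {S T : Finset α} (hST : S ⊆ T) :
    #(G.interedges T T) ≤ #(G.interedges S S) + 2 * (#(T \ S) * #T) := by
  have hdisj : Disjoint S (T \ S) := disjoint_sdiff
  have hT : S ∪ (T \ S) = T := union_sdiff_of_subset hST
  have hsplit := card_interedges_union_left G hdisj T
  have hS := card_interedges_union_right G S hdisj
  rw [hT] at hsplit hS
  have hcross : #(G.interedges S (T \ S)) ≤ #(G.interedges (T \ S) T) := by
    rw [card_interedges_comm]
    exact card_le_card (interedges_mono G subset_rfl hST)
  have := G.card_interedges_le_mul (T \ S) T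
  omega

theorem card_filter_not_adj_and_not_adj_add (S : Finset α) (p q : α) :
    #{u ∈ S | ¬G.Adj u p ∧ ¬G.Adj u q} + #{q' ∈ S | G.Adj p q'} + #{p' ∈ S | G.Adj q p'} =
      #S + #{u ∈ S | G.Adj u p ∧ G.Adj u q} := by
  have h1 := card_filter_add_card_filter_not (s := S) (fun u => G.Adj u p ∨ G.Adj u q)
  have h2 := card_union_add_card_inter {u ∈ S | G.Adj u p} {u ∈ S | G.Adj u q}
  simp only [not_or] at h1
  rw [← filter_or, ← filter_and] at h2
  simp only [G.adj_comm p, G.adj_comm q]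
  omega

theorem sum_card_interedges_nonadj_add (S : Finset α) :
    ∑ u ∈ S, #(G.interedges {v ∈ S | ¬G.Adj u v} {v ∈ S | ¬G.Adj u v}) +
        2 * ∑ p ∈ S, #{q ∈ S | G.Adj p q} ^ 2 =
      #S * #(G.interedges S S) +
        ∑ u ∈ S, #(G.interedges {v ∈ S | G.Adj u v} {v ∈ S | G.Adj u v}) := by
  have hdouble : ∀ P : α → α × α → Prop, [∀ u e, Decidable (P u e)] →
      ∑ u ∈ S, #{e ∈ G.interedges S S | P u e} =
        ∑ e ∈ G.interedges S S, #{u ∈ S | P u e} := fun P _ =>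
    sum_card_bipartiteAbove_eq_sum_card_bipartiteBelow P
  have hsq : ∑ p ∈ S, #{q ∈ S | G.Adj p q} ^ 2 =
      ∑ e ∈ G.interedges S S, #{q ∈ S | G.Adj e.1 q} := by
    rw [G.sum_interedges_fst S fun p => #{q ∈ S | G.Adj p q}]
    simp only [sq]
  simp only [G.interedges_filter_eq, hdouble]
  rw [two_mul, hsq]
  nth_rewrite 2 [← G.sum_interedges_snd S fun p => #{q ∈ S | G.Adj p q}]
  rw [mul_comm, ← smul_eq_mul, ← sum_const, ← sum_add_distrib, ← sum_add_distrib,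
    ← sum_add_distrib]
  refine sum_congr rfl fun e _ => ?_
  have := G.card_filter_not_adj_and_not_adj_add S e.1 e.2
  omega

end Interedges

def monochromatic (G : SimpleGraph α) (f : α → κ) : SimpleGraph α where
  Adj p q := G.Adj p q ∧ f p = f q
  symm := ⟨fun _ _ h => ⟨h.1.symm, h.2.symm⟩⟩
  loopless := ⟨fun _ h => G.irrefl h.1⟩

@[simp]
theorem monochromatic_adj (G : SimpleGraph α) (f : α → κ) {p q : α} :
    (G.monochromatic f).Adj p q ↔ G.Adj p q ∧ f p = f q :=
  Iff.rfl

theorem monochromatic_le (G : SimpleGraph α) (f : α → κ) : G.monochromatic f ≤ G :=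
  fun _ _ h => h.1

section Monochromatic

variable (G : SimpleGraph α) [DecidableRel G.Adj] [DecidableEq κ]

instance (f : α → κ) : DecidableRel (G.monochromatic f).Adj :=
  fun _ _ => decidable_of_iff' _ (monochromatic_adj G f)

theorem interedges_monochromatic (f : α → κ) (X Y : Finset α) :
    (G.monochromatic f).interedges X Y = {e ∈ G.interedges X Y | f e.1 = f e.2} := by
  ext ⟨p, q⟩
  simp only [mk_mem_interedges_iff, monochromatic_adj, mem_filter]
  tauto

theorem card_interedges_monochromatic_le (f : α → κ) (X Y : Finset α) :
    #((G.monochromatic f).interedges X Y) ≤ #(G.interedges X Y) :=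
  G.interedges_monochromatic f X Y ▸ card_filter_le _ _

theorem interedges_monochromatic_congr {f g : α → κ} {X : Finset α} (h : Set.EqOn f g X) :
    (G.monochromatic f).interedges X X = (G.monochromatic g).interedges X X := by
  ext ⟨p, q⟩
  simp only [mk_mem_interedges_iff, monochromatic_adj]
  constructor <;> rintro ⟨hp, hq, hpq, hc⟩
  · exact ⟨hp, hq, hpq, by rwa [← h hp, ← h hq]⟩
  · exact ⟨hp, hq, hpq, by rwa [h hp, h hq]⟩

theorem exists_bipartition_of_fin_four (f : α → Fin 4) (X : Finset α) :
    ∃ π : α → Fin 2, 3 * #((G.monochromatic π).interedges X X) ≤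
      2 * #((G.monochromatic f).interedges X X) + #(G.interedges X X) := by
  -- `σ i` puts colours `0` and `i + 1` on one side: a monochromatic edge stays inside a side for
  -- all three `i`, any other edge for exactly one.
  let σ : Fin 3 → Fin 4 → Fin 2 := fun i c => if c = 0 ∨ c = i.succ then 0 else 1
  have hσ : ∀ a b : Fin 4, ∑ i, (if σ i a = σ i b then 1 else 0) =
      2 * (if a = b then 1 else 0) + 1 := by decide
  have htotal : ∑ i, #((G.monochromatic (σ i ∘ f)).interedges X X) =
      2 * #((G.monochromatic f).interedges X X) + #(G.interedges X X) := by
    simp only [interedges_monochromatic, card_filter, Function.comp_apply]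
    rw [sum_comm, mul_sum, card_eq_sum_ones, ← sum_add_distrib]
    exact sum_congr rfl fun e _ => hσ (f e.1) (f e.2)
  obtain ⟨i, -, hi⟩ := exists_le_of_sum_le univ_nonempty
    (f := fun i => 3 * #((G.monochromatic (σ i ∘ f)).interedges X X))
    (g := fun _ => 2 * #((G.monochromatic f).interedges X X) + #(G.interedges X X))
    (by simp [← mul_sum, htotal])
  exact ⟨σ i ∘ f, hi⟩

theorem two_mul_tauB_le [Fintype α] (π : α → Fin 2) :
    2 * tauB G ≤ #((G.monochromatic π).interedges univ univ) := by
  rw [card_interedges_univ]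
  refine Nat.mul_le_mul_left 2 (Nat.sInf_le ⟨_, ?_, ⟨Coloring.mk π ?_⟩, rfl⟩)
  · rw [coe_edgeFinset]
    exact edgeSet_mono (G.monochromatic_le π)
  · intro p q hpq hπ
    rw [deleteEdges_adj, coe_edgeFinset, mem_edgeSet] at hpq
    exact hpq.2 ⟨hpq.1, hπ⟩

end Monochromatic

section Coloring

variable (G : SimpleGraph α) [DecidableRel G.Adj]

def extendAt (u : α) {n : ℕ} (f : α → Fin n) (v : α) : Fin (n + 1) :=
  if G.Adj u v then (f v).castSucc else Fin.last n

variable [DecidableEq α]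

theorem interedges_monochromatic_extendAt_subset (u : α) {n : ℕ} (f : α → Fin n)
    (X : Finset α) :
    (G.monochromatic (G.extendAt u f)).interedges X X ⊆
      (G.monochromatic f).interedges {v ∈ X | G.Adj u v} {v ∈ X | G.Adj u v} ∪
        G.interedges {v ∈ X | ¬G.Adj u v} {v ∈ X | ¬G.Adj u v} := by
  rintro ⟨p, q⟩ hpq
  simp only [mk_mem_interedges_iff, monochromatic_adj, extendAt] at hpq
  obtain ⟨hp, hq, hadj, hc⟩ := hpq
  simp only [mem_union, mk_mem_interedges_iff, monochromatic_adj, mem_filter]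
  by_cases hup : G.Adj u p <;> by_cases huq : G.Adj u q <;>
    simp_all [Fin.castSucc_ne_last, (Fin.castSucc_ne_last _).symm]

theorem card_interedges_monochromatic_extendAt_le (u : α) {n : ℕ} (f : α → Fin n)
    (X : Finset α) :
    #((G.monochromatic (G.extendAt u f)).interedges X X) ≤
      #((G.monochromatic f).interedges {v ∈ X | G.Adj u v} {v ∈ X | G.Adj u v}) +
        #(G.interedges {v ∈ X | ¬G.Adj u v} {v ∈ X | ¬G.Adj u v}) :=
  (card_le_card (G.interedges_monochromatic_extendAt_subset u f X)).trans (card_union_le _ _)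

theorem card_interedges_monochromatic_extendAt_add_le (u : α) {n : ℕ} (f : α → Fin n)
    (X : Finset α) :
    #((G.monochromatic (G.extendAt u f)).interedges X X) + #(G.interedges X X) ≤
      #((G.monochromatic f).interedges {v ∈ X | G.Adj u v} {v ∈ X | G.Adj u v}) +
        #(G.interedges {v ∈ X | G.Adj u v} {v ∈ X | G.Adj u v}) +
          2 * #(G.interedges {v ∈ X | ¬G.Adj u v} X) := by
  have hdisj : Disjoint {v ∈ X | G.Adj u v} {v ∈ X | ¬G.Adj u v} :=
    disjoint_filter_filter_not _ _ _
  have hX : {v ∈ X | G.Adj u v} ∪ {v ∈ X | ¬G.Adj u v} = X := filter_union_filter_not_eq _ _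
  have hsplit := G.card_interedges_union_left hdisj X
  have hN := G.card_interedges_union_right {v ∈ X | G.Adj u v} hdisj
  have hM := G.card_interedges_union_left hdisj {v ∈ X | ¬G.Adj u v}
  rw [hX] at hsplit hN hM
  have := G.card_interedges_monochromatic_extendAt_le u f X
  have := G.card_interedges_comm {v ∈ X | G.Adj u v} {v ∈ X | ¬G.Adj u v}
  have := G.card_interedges_comm X {v ∈ X | ¬G.Adj u v}
  omega

theorem exists_coloring_of_cliqueFreeOn (r : ℕ) {X : Finset α}
    (hX : G.CliqueFreeOn X (r + 2)) :
    ∃ f : α → Fin (r + 1), (r + 1) * (#((G.monochromatic f).interedges X X) +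
      #(G.interedges X X)) ≤ r * #X ^ 2 := by
  induction r generalizing X with
  | zero =>
    refine ⟨fun _ => 0, ?_⟩
    have hE := G.interedges_eq_empty_of_cliqueFreeOn_two hX
    have := G.card_interedges_monochromatic_le (fun _ => (0 : Fin 1)) X X
    simp_all
  | succ r ih =>
    obtain rfl | hne := X.eq_empty_or_nonempty
    · exact ⟨fun _ => 0, by simp⟩
    obtain ⟨w, hw, hmax⟩ := X.exists_max_image (fun v => #{q ∈ X | G.Adj v q}) hne
    obtain ⟨f, hf⟩ := ih (G.cliqueFreeOn_filter_adj hX hw)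
    refine ⟨G.extendAt w f, ?_⟩
    have hstep := G.card_interedges_monochromatic_extendAt_add_le w f X
    have hdeg : #(G.interedges {v ∈ X | ¬G.Adj w v} X) ≤
        #{v ∈ X | ¬G.Adj w v} * #{v ∈ X | G.Adj w v} :=
      G.card_interedges_le_card_mul fun p hp => hmax p (mem_filter.1 hp).1
    have hcard : #{v ∈ X | G.Adj w v} + #{v ∈ X | ¬G.Adj w v} = #X :=
      card_filter_add_card_filter_not _
    generalize #{v ∈ X | G.Adj w v} = d, #{v ∈ X | ¬G.Adj w v} = m at *
    generalize #((G.monochromatic (G.extendAt w f)).interedges X X) +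
      #(G.interedges X X) = A at *
    rw [← hcard]
    refine Nat.le_of_mul_le_mul_left ?_ (Nat.succ_pos r)
    have h1 := Nat.mul_le_mul_left ((r + 2) * (r + 1)) hstep
    have h2 := Nat.mul_le_mul_left (r + 2) hf
    have h3 := Nat.mul_le_mul_left (2 * (r + 2) * (r + 1)) hdeg
    zify at *
    nlinarith [sq_nonneg ((d : ℤ) - (r + 1) * m)]

theorem exists_coloring_of_cliqueFreeOn_by_averaging (r : ℕ) {S : Finset α}
    (hS : G.CliqueFreeOn S (r + 3)) :
    ∃ f : α → Fin (r + 2), (r + 1) * #S ^ 2 * #((G.monochromatic f).interedges S S) +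
      (r + 2) * #(G.interedges S S) ^ 2 ≤ (r + 1) * #S ^ 2 * #(G.interedges S S) := by
  obtain rfl | hne := S.eq_empty_or_nonempty
  · exact ⟨fun _ => 0, by simp⟩
  choose! f hf using fun u (hu : u ∈ S) =>
    G.exists_coloring_of_cliqueFreeOn r (G.cliqueFreeOn_filter_adj hS hu)
  have hsum : ∑ u ∈ S, (r + 1) * #((G.monochromatic (G.extendAt u (f u))).interedges S S) +
      (r + 2) * ∑ p ∈ S, #{q ∈ S | G.Adj p q} ^ 2 ≤ (r + 1) * #S * #(G.interedges S S) := by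
    have hper : ∀ u ∈ S,
        (r + 1) * #((G.monochromatic (G.extendAt u (f u))).interedges S S) +
          (r + 1) * #(G.interedges {v ∈ S | G.Adj u v} {v ∈ S | G.Adj u v}) ≤
        r * #{q ∈ S | G.Adj u q} ^ 2 +
          (r + 1) * #(G.interedges {v ∈ S | ¬G.Adj u v} {v ∈ S | ¬G.Adj u v}) := by
      intro u hu
      have := G.card_interedges_monochromatic_extendAt_le u (f u) S
      have := hf u hu
      nlinarith
    have := sum_le_sum hper
    have := G.sum_card_interedges_nonadj_add S
    simp only [sum_add_distrib, ← mul_sum] at *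
    nlinarith
  obtain ⟨u, -, hu⟩ := exists_le_of_sum_le hne (f := fun u =>
      #S * ((r + 1) * #((G.monochromatic (G.extendAt u (f u))).interedges S S)) +
        (r + 2) * ∑ p ∈ S, #{q ∈ S | G.Adj p q} ^ 2)
    (g := fun _ => (r + 1) * #S * #(G.interedges S S)) (by
      simp only [sum_add_distrib, sum_const, smul_eq_mul, ← mul_sum] at hsum ⊢
      have := Nat.mul_le_mul_left #S hsum
      linarith)
  refine ⟨G.extendAt u (f u), ?_⟩
  have := G.sq_card_interedges_le S
  have := Nat.mul_le_mul_left #S hu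
  nlinarith

theorem exists_coloring_of_cliqueFreeOn_five {S : Finset α} (hS : G.CliqueFreeOn S 5) :
    ∃ f : α → Fin 4, 32 * (2 * #((G.monochromatic f).interedges S S) + #(G.interedges S S)) ≤
      27 * #S ^ 2 := by
  obtain ⟨f, hf⟩ := G.exists_coloring_of_cliqueFreeOn_by_averaging 2 hS
  refine ⟨f, ?_⟩
  have hm := G.card_interedges_monochromatic_le f S S
  have hE := G.card_interedges_le_mul S S
  obtain hS0 | hSpos := (#S).eq_zero_or_pos
  · simp only [hS0, mul_zero] at hE ⊢
    omega
  -- `27|S|²/32` is the maximum over `E` of `3E - 8E²/(3|S|²)`.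
  refine Nat.le_of_mul_le_mul_left ?_ (by positivity : 0 < 3 * #S ^ 2)
  zify at *
  nlinarith [sq_nonneg (16 * (#(G.interedges S S) : ℤ) - 9 * #S ^ 2)]

theorem exists_update_card_interedges_monochromatic_insert [Fintype κ] [Nonempty κ]
    [DecidableEq κ] (f : α → κ) {a : α} {P : Finset α} (ha : a ∉ P) :
    ∃ c, Fintype.card κ * #((G.monochromatic (Function.update f a c)).interedges
        (insert a P) (insert a P)) + #(G.interedges P P) ≤
      Fintype.card κ * #((G.monochromatic f).interedges P P) +
        #(G.interedges (insert a P) (insert a P)) := by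
  have hfib : #{q ∈ P | G.Adj a q} = ∑ c, #{q ∈ {q ∈ P | G.Adj a q} | f q = c} :=
    card_eq_sum_card_fiberwise fun _ _ => mem_univ _
  obtain ⟨c, -, hc⟩ := exists_le_of_sum_le univ_nonempty
    (f := fun c => Fintype.card κ * #{q ∈ {q ∈ P | G.Adj a q} | f q = c})
    (g := fun _ => #{q ∈ P | G.Adj a q}) (by simp [← mul_sum, ← hfib])
  refine ⟨c, ?_⟩
  have hoff : Set.EqOn (Function.update f a c) f P := fun q hq =>
    Function.update_of_ne (ne_of_mem_of_not_mem hq ha) _ _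
  have hrow : {q ∈ P | (G.monochromatic (Function.update f a c)).Adj a q} =
      {q ∈ {q ∈ P | G.Adj a q} | f q = c} := by
    ext q
    simp only [mem_filter, monochromatic_adj, Function.update_self]
    constructor
    · rintro ⟨hq, hadj, hc⟩
      exact ⟨⟨hq, hadj⟩, by rw [hc, hoff hq]⟩
    · rintro ⟨⟨hq, hadj⟩, hc⟩
      exact ⟨hq, hadj, by rw [hoff hq, hc]⟩
  rw [card_interedges_insert _ ha, card_interedges_insert _ ha, hrow,
    G.interedges_monochromatic_congr hoff]
  nlinarith

theorem exists_coloring_extension [Fintype κ] [Nonempty κ] [DecidableEq κ] (f : α → κ)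
    {S T : Finset α} (hST : S ⊆ T) :
    ∃ g : α → κ, Fintype.card κ * #((G.monochromatic g).interedges T T) + #(G.interedges S S) ≤
      Fintype.card κ * #((G.monochromatic f).interedges S S) + #(G.interedges T T) := by
  rw [← union_sdiff_of_subset hST]
  induction T \ S using Finset.induction_on with
  | empty => exact ⟨f, by simp⟩
  | insert a U _ ih =>
    obtain ⟨g, hg⟩ := ih
    rw [union_insert]
    by_cases ha : a ∈ S ∪ U
    · rw [insert_eq_of_mem ha]
      exact ⟨g, hg⟩
    obtain ⟨c, hc⟩ := G.exists_update_card_interedges_monochromatic_insert g ha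
    exact ⟨Function.update g a c, by omega⟩

theorem tauB_le_of_cliqueFreeOn_five [Fintype α] {S : Finset α} (hS : G.CliqueFreeOn S 5) :
    64 * tauB G ≤ 9 * #S ^ 2 + 32 * (#Sᶜ * Fintype.card α) := by
  obtain ⟨f, hf⟩ := G.exists_coloring_of_cliqueFreeOn_five hS
  obtain ⟨g, hg⟩ := G.exists_coloring_extension f (subset_univ S)
  obtain ⟨π, hπ⟩ := G.exists_bipartition_of_fin_four g univ
  have hτ := G.two_mul_tauB_le π
  have hout := G.card_interedges_le_of_subset (subset_univ S)
  rw [← compl_eq_univ_sdiff, card_univ] at hout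
  simp only [Fintype.card_fin] at hg
  omega

end Coloring

end SimpleGraph

theorem tauB_le_of_cliqueFree_six_big_K5free_set_general (G : SimpleGraph V)
    (S : Finset V) (hS : (G.induce (S : Set V)).CliqueFree 5)
    (hcard : 49 * (Fintype.card V : ℝ) / 50 ≤ (S.card : ℝ)) :
    (tauB G : ℝ) ≤ 3 * (Fintype.card V : ℝ) ^ 2 / 20 := by
  classical
  have key := G.tauB_le_of_cliqueFreeOn_five ((G.cliqueFree_induce_iff _ _).1 hS)
  rw [card_compl] at key
  have hSV : S.card ≤ Fintype.card V := card_le_univ S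
  have key' : 64 * (tauB G : ℝ) ≤
      9 * (S.card : ℝ) ^ 2 + 32 * ((Fintype.card V - S.card) * Fintype.card V) := by
    exact_mod_cast key
  have hbig : (0 : ℝ) ≤ 50 * S.card - 49 * Fintype.card V := by linarith
  nlinarith [mul_nonneg (sub_nonneg.2 (Nat.cast_le.2 hSV)) hbig]

/-- If `G` is a `K₆`-free graph on `n` vertices and `S` induces a `K₅`-free subgraph
with `|S| ≥ 49n/50`, then `τ_B(G) ≤ 3n²/20`. -/
theorem tauB_le_of_cliqueFree_six_big_K5free_set (G : SimpleGraph V) (h6 : G.CliqueFree 6)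
    (S : Finset V) (hS : (G.induce (S : Set V)).CliqueFree 5)
    (hcard : 49 * (Fintype.card V : ℝ) / 50 ≤ (S.card : ℝ)) :
    (tauB G : ℝ) ≤ 3 * (Fintype.card V : ℝ) ^ 2 / 20 :=
  tauB_le_of_cliqueFree_six_big_K5free_set_general G S hS hcard
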